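/- arXiv:2109.07829 — 5 statements merged into one kernel-verified Lean document; each statement's English description precedes it below -/
import Mathlib

section
/- Let A and C be invertible real d×d matrices and let ψ ∈ L¹(ℝ^d) satisfy: for every ξ ∈ ℝ^d with ξ ≠ 0, ∑_{j∈ℤ} |𝓕ψ((A^T)^{−j} ξ)| = 1 (with the sum over all integers j, using integer powers of the invertible matrix A^T). Then the function ψ ∘ C^{−1} belongs to L¹(ℝ^d) and satisfies: for every ξ ≠ 0, ∑_{j∈ℤ} |𝓕(ψ ∘ C^{−1})(((C A C^{−1})^T)^{−j} ξ)| = |det C|. -/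
open MeasureTheory
open scoped FourierTransform

namespace DilWavAux
open Matrix

variable {d : ℕ}

noncomputable abbrev T (M : Matrix (Fin d) (Fin d) ℝ) :
    EuclideanSpace ℝ (Fin d) →L[ℝ] EuclideanSpace ℝ (Fin d) :=
  Matrix.toEuclideanCLM (𝕜 := ℝ) M

lemma det_T (M : Matrix (Fin d) (Fin d) ℝ) :
    LinearMap.det ((T M : EuclideanSpace ℝ (Fin d) →L[ℝ] EuclideanSpace ℝ (Fin d)) :
      EuclideanSpace ℝ (Fin d) →ₗ[ℝ] EuclideanSpace ℝ (Fin d)) = M.det := by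
  rw [Matrix.coe_toEuclideanCLM_eq_toEuclideanLin, Matrix.toEuclideanLin_eq_toLin,
    LinearMap.det_toLin]

lemma T_inv_comp (M : Matrix (Fin d) (Fin d) ℝ) (hM : IsUnit M)
    (x : EuclideanSpace ℝ (Fin d)) : T M⁻¹ (T M x) = x := by
  have h1 : T (M⁻¹ * M) = T M⁻¹ * T M := map_mul _ _ _
  have h2 : M⁻¹ * M = 1 := Matrix.nonsing_inv_mul M ((Matrix.isUnit_iff_isUnit_det M).mp hM)
  have := congrFun (congrArg (fun (f : _ →L[ℝ] _) => (f : _ → _)) h1) x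
  simp only [h2, _root_.map_one, ContinuousLinearMap.one_apply, ContinuousLinearMap.mul_apply] at this
  exact this.symm

lemma T_comp_inv (M : Matrix (Fin d) (Fin d) ℝ) (hM : IsUnit M)
    (x : EuclideanSpace ℝ (Fin d)) : T M (T M⁻¹ x) = x := by
  have h1 : T (M * M⁻¹) = T M * T M⁻¹ := map_mul _ _ _
  have h2 : M * M⁻¹ = 1 := Matrix.mul_nonsing_inv M ((Matrix.isUnit_iff_isUnit_det M).mp hM)
  have := congrFun (congrArg (fun (f : _ →L[ℝ] _) => (f : _ → _)) h1) x
  simp only [h2, _root_.map_one, ContinuousLinearMap.one_apply, ContinuousLinearMap.mul_apply] at this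
  exact this.symm

/-- homeomorphism induced by an invertible matrix -/
noncomputable def homeoT (M : Matrix (Fin d) (Fin d) ℝ) (hM : IsUnit M) :
    EuclideanSpace ℝ (Fin d) ≃ₜ EuclideanSpace ℝ (Fin d) where
  toFun := T M
  invFun := T M⁻¹
  left_inv := T_inv_comp M hM
  right_inv := T_comp_inv M hM
  continuous_toFun := (T M).continuous
  continuous_invFun := (T M⁻¹).continuous

lemma map_T (M : Matrix (Fin d) (Fin d) ℝ) (hM : IsUnit M) :
    Measure.map (T M) (volume : Measure (EuclideanSpace ℝ (Fin d))) =
      ENNReal.ofReal |M.det|⁻¹ • volume := by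
  have hdet : M.det ≠ 0 := ((Matrix.isUnit_iff_isUnit_det M).mp hM).ne_zero
  have h := Measure.map_linearMap_addHaar_eq_smul_addHaar
    (μ := (volume : Measure (EuclideanSpace ℝ (Fin d))))
    (f := ((T M : EuclideanSpace ℝ (Fin d) →L[ℝ] EuclideanSpace ℝ (Fin d)) :
      EuclideanSpace ℝ (Fin d) →ₗ[ℝ] EuclideanSpace ℝ (Fin d)))
    (by rw [det_T]; exact hdet)
  rw [det_T] at h
  simpa [abs_inv] using h

lemma isUnit_inv (M : Matrix (Fin d) (Fin d) ℝ) (hM : IsUnit M) : IsUnit M⁻¹ := by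
  have hdet : M.det ≠ 0 := ((Matrix.isUnit_iff_isUnit_det M).mp hM).ne_zero
  refine (Matrix.isUnit_iff_isUnit_det _).mpr ?_
  rw [Matrix.det_nonsing_inv]
  exact isUnit_iff_ne_zero.mpr (by simpa using inv_ne_zero hdet)

lemma isUnit_transpose (M : Matrix (Fin d) (Fin d) ℝ) (hM : IsUnit M) : IsUnit Mᵀ := by
  refine (Matrix.isUnit_iff_isUnit_det _).mpr ?_
  rw [Matrix.det_transpose]
  exact (Matrix.isUnit_iff_isUnit_det M).mp hM

lemma inner_T (M : Matrix (Fin d) (Fin d) ℝ) (v w : EuclideanSpace ℝ (Fin d)) :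
    inner ℝ (T M v) w = (inner ℝ v (T Mᵀ w) : ℝ) := by
  have hT : ∀ (N : Matrix (Fin d) (Fin d) ℝ) (x : EuclideanSpace ℝ (Fin d)),
      T N x = Matrix.toEuclideanLin N x := fun N x => by
    rw [← Matrix.coe_toEuclideanCLM_eq_toEuclideanLin]; rfl
  rw [hT, hT, ← Matrix.conjTranspose_eq_transpose_of_trivial,
    Matrix.toEuclideanLin_conjTranspose_eq_adjoint, LinearMap.adjoint_inner_right]

lemma key_mat (A C : Matrix (Fin d) (Fin d) ℝ) (hA : IsUnit A) (hC : IsUnit C) (j : ℤ) :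
    Cᵀ * ((C * A * C⁻¹)ᵀ ^ (-j)) = (Aᵀ ^ (-j)) * Cᵀ := by
  have hCdet : IsUnit C.det := (Matrix.isUnit_iff_isUnit_det C).mp hC
  have hu : ((hC.unit : (Matrix (Fin d) (Fin d) ℝ)ˣ) : Matrix (Fin d) (Fin d) ℝ) = C :=
    hC.unit_spec
  have hv : ((hA.unit : (Matrix (Fin d) (Fin d) ℝ)ˣ) : Matrix (Fin d) (Fin d) ℝ) = A :=
    hA.unit_spec
  have hC' : ((hC.unit⁻¹ : (Matrix (Fin d) (Fin d) ℝ)ˣ) : Matrix (Fin d) (Fin d) ℝ) = C⁻¹ := by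
    rw [Matrix.coe_units_inv, hu]
  have hconj : (C * A * C⁻¹) ^ (-j) = C * A ^ (-j) * C⁻¹ := by
    have base : (((hC.unit : (Matrix (Fin d) (Fin d) ℝ)ˣ) : Matrix (Fin d) (Fin d) ℝ) *
          ((hA.unit : (Matrix (Fin d) (Fin d) ℝ)ˣ) : Matrix (Fin d) (Fin d) ℝ) *
          ((hC.unit⁻¹ : (Matrix (Fin d) (Fin d) ℝ)ˣ) : Matrix (Fin d) (Fin d) ℝ)) ^ (-j)
        = ((hC.unit : (Matrix (Fin d) (Fin d) ℝ)ˣ) : Matrix (Fin d) (Fin d) ℝ) *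
          ((hA.unit : (Matrix (Fin d) (Fin d) ℝ)ˣ) : Matrix (Fin d) (Fin d) ℝ) ^ (-j) *
          ((hC.unit⁻¹ : (Matrix (Fin d) (Fin d) ℝ)ˣ) : Matrix (Fin d) (Fin d) ℝ) := by
      rw [← Units.val_mul, ← Units.val_mul, ← Matrix.coe_units_zpow, conj_zpow,
        Units.val_mul, Units.val_mul, Matrix.coe_units_zpow]
    rw [hu, hv, hC'] at base
    exact base
  rw [← Matrix.transpose_zpow, hconj, Matrix.transpose_mul, Matrix.transpose_mul,
    Matrix.transpose_zpow, Matrix.transpose_nonsing_inv, ← mul_assoc, ← mul_assoc,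
    Matrix.mul_nonsing_inv Cᵀ (by rw [Matrix.det_transpose]; exact hCdet), one_mul]

lemma integrable_comp (C : Matrix (Fin d) (Fin d) ℝ) (hC : IsUnit C)
    (ψ : EuclideanSpace ℝ (Fin d) → ℂ) (hψ : Integrable ψ) :
    Integrable (fun x => ψ (T C⁻¹ x)) := by
  have hCinv : IsUnit C⁻¹ := isUnit_inv C hC
  let e := (homeoT C⁻¹ hCinv).toMeasurableEquiv
  have hmap : Measure.map (⇑e) (volume : Measure (EuclideanSpace ℝ (Fin d)))
      = ENNReal.ofReal |(C⁻¹).det|⁻¹ • volume := map_T C⁻¹ hCinv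
  have h1 : Integrable ψ (Measure.map (⇑e) volume) := by
    rw [hmap]; exact hψ.smul_measure ENNReal.ofReal_ne_top
  exact (integrable_map_equiv e ψ).mp h1

lemma fourier_comp (C : Matrix (Fin d) (Fin d) ℝ) (hC : IsUnit C)
    (ψ : EuclideanSpace ℝ (Fin d) → ℂ) (w : EuclideanSpace ℝ (Fin d)) :
    𝓕 (fun x => ψ (T C⁻¹ x)) w = |C.det| • 𝓕 ψ (T Cᵀ w) := by
  have hdet : C.det ≠ 0 := ((Matrix.isUnit_iff_isUnit_det C).mp hC).ne_zero
  let e := (homeoT C hC).toMeasurableEquiv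
  have hmap : Measure.map (⇑e) (volume : Measure (EuclideanSpace ℝ (Fin d)))
      = ENNReal.ofReal |C.det|⁻¹ • volume := map_T C hC
  have h1 := MeasureTheory.integral_map_equiv (μ := volume) e
    (fun x => 𝐞 (-(inner ℝ x w : ℝ)) • ψ (T C⁻¹ x))
  rw [hmap, integral_smul_measure] at h1
  have h2 : ∀ v : EuclideanSpace ℝ (Fin d),
      𝐞 (-(inner ℝ (e v) w : ℝ)) • ψ (T C⁻¹ (e v)) = 𝐞 (-(inner ℝ v (T Cᵀ w) : ℝ)) • ψ v := by
    intro v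
    have he : e v = T C v := rfl
    rw [he, inner_T, T_inv_comp C hC]
  have htoReal : (ENNReal.ofReal |C.det|⁻¹).toReal = |C.det|⁻¹ :=
    ENNReal.toReal_ofReal (by positivity)
  rw [htoReal] at h1
  simp only [h2] at h1
  -- h1 : |C.det|⁻¹ • ∫ x, 𝐞(-⟪x,w⟫) • ψ (T C⁻¹ x) = ∫ v, 𝐞(-⟪v, T Cᵀ w⟫) • ψ v
  rw [Real.fourier_eq, Real.fourier_eq, ← h1, smul_smul,
    mul_inv_cancel₀ (abs_ne_zero.mpr hdet), one_smul]

end DilWavAux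


/-- If `ψ ∈ L¹(ℝ^d)` satisfies the wavelet partition-of-unity condition
`∑_{j∈ℤ} |𝓕ψ((Aᵀ)^{−j} ξ)| = 1` for all `ξ ≠ 0`, then for any invertible `C` the dilate
`ψ ∘ C⁻¹` is integrable and satisfies
`∑_{j∈ℤ} |𝓕(ψ ∘ C⁻¹)(((CAC⁻¹)ᵀ)^{−j} ξ)| = |det C|` for all `ξ ≠ 0`. -/
theorem dilated_wavelet
    (d : ℕ) (A C : Matrix (Fin d) (Fin d) ℝ) (hA : IsUnit A) (hC : IsUnit C)
    (ψ : EuclideanSpace ℝ (Fin d) → ℂ) (hψ : Integrable ψ)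
    (hwav : ∀ ξ : EuclideanSpace ℝ (Fin d), ξ ≠ 0 →
      ∑' j : ℤ, ‖(𝓕 ψ (Matrix.toEuclideanCLM (𝕜 := ℝ) (A.transpose ^ (-j)) ξ))‖ = 1) :
    Integrable (fun x => ψ (Matrix.toEuclideanCLM (𝕜 := ℝ) C⁻¹ x)) ∧
    ∀ ξ : EuclideanSpace ℝ (Fin d), ξ ≠ 0 →
      ∑' j : ℤ, ‖
          (𝓕 (fun x => ψ (Matrix.toEuclideanCLM (𝕜 := ℝ) C⁻¹ x))
            (Matrix.toEuclideanCLM (𝕜 := ℝ) ((C * A * C⁻¹).transpose ^ (-j)) ξ))‖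
        = |C.det| := by
  constructor
  · exact DilWavAux.integrable_comp C hC ψ hψ
  · intro ξ hξ
    have hCt : IsUnit (Matrix.transpose C) := DilWavAux.isUnit_transpose C hC
    have hξ' : DilWavAux.T (Matrix.transpose C) ξ ≠ 0 := by
      intro h
      apply hξ
      have h2 := DilWavAux.T_inv_comp (Matrix.transpose C) hCt ξ
      rw [h, map_zero] at h2
      exact h2.symm
    have hterm : ∀ j : ℤ,
        ‖(𝓕 (fun x => ψ (Matrix.toEuclideanCLM (𝕜 := ℝ) C⁻¹ x))
            (Matrix.toEuclideanCLM (𝕜 := ℝ) ((C * A * C⁻¹).transpose ^ (-j)) ξ))‖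
        = |C.det| * ‖(𝓕 ψ
            (Matrix.toEuclideanCLM (𝕜 := ℝ) (A.transpose ^ (-j)) (DilWavAux.T (Matrix.transpose C) ξ)))‖ := by
      intro j
      rw [DilWavAux.fourier_comp C hC ψ]
      have hmul : DilWavAux.T (Matrix.transpose C) * DilWavAux.T ((C * A * C⁻¹).transpose ^ (-j))
          = DilWavAux.T (A.transpose ^ (-j)) * DilWavAux.T (Matrix.transpose C) := by
        rw [← map_mul, ← map_mul, DilWavAux.key_mat A C hA hC j]
      have harg : DilWavAux.T (Matrix.transpose C) (DilWavAux.T ((C * A * C⁻¹).transpose ^ (-j)) ξ)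
          = DilWavAux.T (A.transpose ^ (-j)) (DilWavAux.T (Matrix.transpose C) ξ) := by
        have := congrFun (congrArg (fun (f : _ →L[ℝ] _) => (f : _ → _)) hmul) ξ
        simpa [ContinuousLinearMap.mul_apply] using this
      rw [harg, Complex.real_smul, norm_mul, Complex.norm_real, Real.norm_eq_abs, abs_abs]
    calc ∑' j : ℤ, ‖
          (𝓕 (fun x => ψ (Matrix.toEuclideanCLM (𝕜 := ℝ) C⁻¹ x))
            (Matrix.toEuclideanCLM (𝕜 := ℝ) ((C * A * C⁻¹).transpose ^ (-j)) ξ))‖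
        = ∑' j : ℤ, |C.det| * ‖(𝓕 ψ
            (Matrix.toEuclideanCLM (𝕜 := ℝ) (A.transpose ^ (-j)) (DilWavAux.T (Matrix.transpose C) ξ)))‖ :=
          tsum_congr hterm
      _ = |C.det| * ∑' j : ℤ, ‖(𝓕 ψ
            (Matrix.toEuclideanCLM (𝕜 := ℝ) (A.transpose ^ (-j)) (DilWavAux.T (Matrix.transpose C) ξ)))‖ :=
          tsum_mul_left
      _ = |C.det| := by rw [hwav _ hξ', mul_one]
end

section
/- Let A be an expansive real d×d matrix and let K ⊆ ℝ^d be a compact set with 0 ∉ K. Then there exists N ∈ ℕ such that for all integers j, ℓ with |j − ℓ| ≥ N, the sets A^j K and A^ℓ K (images of K under the integer powers A^j and A^ℓ of the invertible matrix A) are disjoint. -/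
/-- A complex number `μ` is an eigenvalue of the real matrix `A` if it is a root of the
characteristic polynomial of `A` viewed as a complex matrix. -/
def IsEigenvalue {d : ℕ} (A : Matrix (Fin d) (Fin d) ℝ) (μ : ℂ) : Prop :=
  ((A.map (Complex.ofReal)).charpoly).IsRoot μ

/-- A real `d×d` matrix is expansive if it is invertible and all of its complex eigenvalues `λ`
satisfy `|λ| > 1`. -/
def IsExpansive {d : ℕ} (A : Matrix (Fin d) (Fin d) ℝ) : Prop :=
  IsUnit A ∧ ∀ μ : ℂ, IsEigenvalue A μ → 1 < ‖μ‖

open Matrix Polynomial Filter Topology ENNReal NNReal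

lemma aux_charpoly_eval_eq {n : Type*} [Fintype n] [DecidableEq n] {R : Type*} [CommRing R]
    (M : Matrix n n R) (μ : R) :
    M.charpoly.eval μ = (Matrix.scalar n μ - M).det := by
  rw [Matrix.charpoly, _root_.eval_det, matPolyEquiv_charmatrix]
  simp

lemma aux_mem_spectrum_iff_isRoot {d : ℕ} (M : Matrix (Fin d) (Fin d) ℂ) (μ : ℂ) :
    μ ∈ spectrum ℂ M ↔ M.charpoly.IsRoot μ := by
  rw [spectrum.mem_iff, Polynomial.IsRoot, aux_charpoly_eval_eq,
    Matrix.isUnit_iff_isUnit_det, isUnit_iff_ne_zero, not_ne_iff]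
  congr! 2

lemma aux_norm_map_complex_eq {d : ℕ} (x : EuclideanSpace ℝ (Fin d)) :
    ‖((WithLp.equiv 2 (Fin d → ℂ)).symm fun i => (x i : ℂ))‖ = ‖x‖ := by
  rw [EuclideanSpace.norm_eq, EuclideanSpace.norm_eq]
  congr 1
  refine Finset.sum_congr rfl fun i _ => ?_
  simp

lemma aux_clm_real_le {d : ℕ} (M : Matrix (Fin d) (Fin d) ℝ) (x : EuclideanSpace ℝ (Fin d)) :
    ‖Matrix.toEuclideanCLM (𝕜 := ℝ) M x‖ ≤
      ‖Matrix.toEuclideanCLM (𝕜 := ℂ) (M.map Complex.ofReal)‖ * ‖x‖ := by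
  have hx := Matrix.ofLp_toEuclideanCLM (𝕜 := ℝ) M x
  have hc := Matrix.toEuclideanCLM_toLp (𝕜 := ℂ) (M.map Complex.ofReal)
      (fun i => (x i : ℂ))
  have key : Matrix.toEuclideanCLM (𝕜 := ℂ) (M.map Complex.ofReal)
        ((WithLp.equiv 2 (Fin d → ℂ)).symm fun i => (x i : ℂ))
      = (WithLp.equiv 2 (Fin d → ℂ)).symm
          fun i => ((Matrix.toEuclideanCLM (𝕜 := ℝ) M x) i : ℂ) := by
    rw [WithLp.equiv_symm_apply, hc]
    congr 1
    funext i
    have hxi := congrFun hx i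
    simp only [Matrix.toLin'_apply] at hxi hc ⊢
    rw [show ((Matrix.toEuclideanCLM (𝕜 := ℝ) M x) i : ℂ)
        = ((M.mulVec (WithLp.equiv 2 (Fin d → ℝ) x)) i : ℂ) from by rw [hxi]; rfl]
    simp [Matrix.mulVec, dotProduct]
  calc ‖Matrix.toEuclideanCLM (𝕜 := ℝ) M x‖
      = ‖Matrix.toEuclideanCLM (𝕜 := ℂ) (M.map Complex.ofReal)
          ((WithLp.equiv 2 (Fin d → ℂ)).symm fun i => (x i : ℂ))‖ := by
        rw [key, aux_norm_map_complex_eq]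
    _ ≤ ‖Matrix.toEuclideanCLM (𝕜 := ℂ) (M.map Complex.ofReal)‖ * ‖x‖ := by
        rw [← aux_norm_map_complex_eq x]
        exact ContinuousLinearMap.le_opNorm _ _

lemma aux_tendsto_pow_norm_zero {A : Type*} [NormedRing A]
    [NormedAlgebra ℂ A] [CompleteSpace A] (a : A) (h : spectralRadius ℂ a < 1) :
    Tendsto (fun n : ℕ => ‖a ^ n‖) atTop (𝓝 0) := by
  obtain ⟨ρ, hρ1, hρ2⟩ := exists_between h
  have hρtop : ρ ≠ ⊤ := ne_top_of_lt hρ2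
  set r : ℝ≥0 := ρ.toNNReal with hr
  have hρr : ρ = (r : ℝ≥0∞) := (ENNReal.coe_toNNReal hρtop).symm
  have hr1 : (r : ℝ) < 1 := by
    have := hρ2
    rw [hρr] at this
    exact_mod_cast this
  have hev : ∀ᶠ n : ℕ in atTop, (‖a ^ n‖₊ : ℝ≥0∞) ^ (1 / (n : ℝ)) < ρ :=
    (spectrum.pow_nnnorm_pow_one_div_tendsto_nhds_spectralRadius a).eventually_lt_const hρ1
  have hev2 : ∀ᶠ n : ℕ in atTop, ‖a ^ n‖ ≤ (r : ℝ) ^ n := by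
    filter_upwards [hev, eventually_ge_atTop 1] with n hn hn1
    have hne : (n : ℝ) ≠ 0 := Nat.cast_ne_zero.mpr (by omega)
    have h1 : ((‖a ^ n‖₊ : ℝ≥0∞) ^ (1 / (n : ℝ))) ^ (n : ℝ) < ρ ^ (n : ℝ) :=
      ENNReal.rpow_lt_rpow hn (by positivity)
    rw [← ENNReal.rpow_mul, one_div, inv_mul_cancel₀ hne, ENNReal.rpow_one,
      ENNReal.rpow_natCast, hρr, ← ENNReal.coe_pow] at h1
    have h2 : ‖a ^ n‖₊ ≤ r ^ n := (ENNReal.coe_lt_coe.mp h1).le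
    calc ‖a ^ n‖ ≤ ((r ^ n : ℝ≥0) : ℝ) := h2
      _ = (r : ℝ) ^ n := by push_cast; ring
  exact squeeze_zero' (Eventually.of_forall fun n => norm_nonneg _) hev2
    (tendsto_pow_atTop_nhds_zero_of_lt_one (by positivity) hr1)

set_option maxHeartbeats 1000000 in
/-- For an expansive matrix `A` and a compact set `K ⊆ ℝ^d` with `0 ∉ K`,
there is `N ∈ ℕ` such that `A^j K` and `A^ℓ K` are disjoint whenever `|j − ℓ| ≥ N`. -/
theorem expansive_cover_disjoint
    (d : ℕ) (A : Matrix (Fin d) (Fin d) ℝ) (hA : IsExpansive A)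
    (K : Set (EuclideanSpace ℝ (Fin d))) (hK : IsCompact K)
    (h0 : (0 : EuclideanSpace ℝ (Fin d)) ∉ K) :
    ∃ N : ℕ, ∀ j ℓ : ℤ, (N : ℤ) ≤ |j - ℓ| →
      Disjoint (Matrix.toEuclideanCLM (𝕜 := ℝ) (A ^ j) '' K)
        (Matrix.toEuclideanCLM (𝕜 := ℝ) (A ^ ℓ) '' K) := by
  classical
  by_cases hKe : K.Nonempty
  swap
  · rw [Set.not_nonempty_iff_eq_empty] at hKe
    exact ⟨0, fun j ℓ _ => by simp [hKe]⟩
  obtain ⟨x0, hx0K⟩ := hKe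
  have hx0 : x0 ≠ 0 := fun h => h0 (h ▸ hx0K)
  -- the space is nontrivial
  obtain ⟨i0, hi0⟩ : ∃ i, x0 i ≠ 0 := by
    by_contra hcon
    push_neg at hcon
    exact hx0 (PiLp.ext hcon)
  haveI : Nontrivial (EuclideanSpace ℂ (Fin d)) :=
    ⟨(WithLp.equiv 2 (Fin d → ℂ)).symm (Function.update 0 i0 1), 0, fun h => by
      have := congrFun (congrArg (WithLp.equiv 2 (Fin d → ℂ)) h) i0
      simp at this⟩
  have hU : IsUnit A := hA.1
  have hdet : IsUnit A.det := (Matrix.isUnit_iff_isUnit_det A).mp hU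
  set B : Matrix (Fin d) (Fin d) ℂ := A.map Complex.ofReal with hB
  set C : Matrix (Fin d) (Fin d) ℂ := A⁻¹.map Complex.ofReal with hC
  have hmapmul : ∀ P Q : Matrix (Fin d) (Fin d) ℝ,
      (P * Q).map Complex.ofReal = P.map Complex.ofReal * Q.map Complex.ofReal := by
    intro P Q
    exact map_mul (RingHom.mapMatrix (Complex.ofRealHom) :
        Matrix (Fin d) (Fin d) ℝ →+* Matrix (Fin d) (Fin d) ℂ) P Q
  have hmapone : ((1 : Matrix (Fin d) (Fin d) ℝ)).map Complex.ofReal = 1 := by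
    exact map_one (RingHom.mapMatrix (Complex.ofRealHom) :
        Matrix (Fin d) (Fin d) ℝ →+* Matrix (Fin d) (Fin d) ℂ)
  have hBC : B * C = 1 := by
    rw [hB, hC, ← hmapmul, Matrix.mul_nonsing_inv _ hdet, hmapone]
  have hCB : C * B = 1 := by
    rw [hB, hC, ← hmapmul, Matrix.nonsing_inv_mul _ hdet, hmapone]
  have hBu : IsUnit B := ⟨⟨B, C, hBC, hCB⟩, rfl⟩
  set T := Matrix.toEuclideanCLM (𝕜 := ℂ) C with hT
  -- spectral radius of T is < 1
  have hspec : ∀ μ ∈ spectrum ℂ T, ‖μ‖₊ < 1 := by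
    intro μ hμ
    rw [hT, AlgEquiv.spectrum_eq] at hμ
    have hCu : IsUnit C := ⟨⟨C, B, hCB, hBC⟩, rfl⟩
    have hμ0 : μ ≠ 0 := by
      intro h
      rw [h] at hμ
      exact (spectrum.zero_notMem ℂ hCu) hμ
    set u : (Matrix (Fin d) (Fin d) ℂ)ˣ := hBu.unit with hu
    have huC : (↑u⁻¹ : Matrix (Fin d) (Fin d) ℂ) = C := by
      rw [Matrix.coe_units_inv, hBu.unit_spec, Matrix.inv_eq_right_inv hBC]
    have hμinv : μ⁻¹ ∈ spectrum ℂ B := by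
      have h2 := (spectrum.inv_mem_iff (R := ℂ)
        (r := (Units.mk0 μ hμ0)⁻¹) (a := u)).mpr
      simp only [inv_inv, Units.val_inv_eq_inv_val, Units.val_mk0, huC] at h2
      have := h2 hμ
      rwa [hBu.unit_spec] at this
    have hroot : IsEigenvalue A μ⁻¹ := (aux_mem_spectrum_iff_isRoot B μ⁻¹).mp hμinv
    have habs := hA.2 _ hroot
    rw [norm_inv] at habs
    have h1 : ‖μ‖ < 1 := (one_lt_inv_iff₀.mp habs).2
    have : ‖μ‖ < 1 := h1
    exact_mod_cast this
  obtain ⟨v, hv⟩ := exists_ne (0 : EuclideanSpace ℂ (Fin d))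
  haveI : Nontrivial (EuclideanSpace ℂ (Fin d) →L[ℂ] EuclideanSpace ℂ (Fin d)) :=
    ⟨1, 0, fun h => hv (by
      have := congrFun (congrArg DFunLike.coe h) v
      simpa using this)⟩
  have hrad : spectralRadius ℂ T < 1 := by
    obtain ⟨z, hz, hzeq⟩ := spectrum.exists_nnnorm_eq_spectralRadius T
    rw [← hzeq]
    have := hspec z hz
    exact_mod_cast this
  -- bounds on K
  have hδ : 0 < Metric.infDist 0 K :=
    (hK.isClosed.notMem_iff_infDist_pos ⟨x0, hx0K⟩).mp h0
  set δ := Metric.infDist 0 K with hδdef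
  obtain ⟨R, hR⟩ := hK.isBounded.exists_norm_le
  set M1 := max R 1 with hM1
  have hM1pos : (0 : ℝ) < M1 := lt_of_lt_of_le one_pos (le_max_right _ _)
  have hRM1 : ∀ y ∈ K, ‖y‖ ≤ M1 := fun y hy => (hR y hy).trans (le_max_left _ _)
  -- choose N
  have htend := aux_tendsto_pow_norm_zero T hrad
  have hevent : ∀ᶠ n : ℕ in atTop, ‖T ^ n‖ < δ / M1 :=
    htend.eventually_lt_const (by positivity)
  obtain ⟨N0, hN0⟩ := eventually_atTop.mp hevent
  refine ⟨max N0 1, ?_⟩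
  -- core claim
  have hcore : ∀ m : ℤ, (max N0 1 : ℤ) ≤ m → ∀ x ∈ K,
      Matrix.toEuclideanCLM (𝕜 := ℝ) (A ^ m) x ∉ K := by
    intro m hm x hx hy
    set n : ℕ := m.toNat with hn
    have hmn : m = (n : ℤ) := (Int.toNat_of_nonneg (by omega)).symm
    have hnN : N0 ≤ n := by omega
    have hpow : (A : Matrix (Fin d) (Fin d) ℝ) ^ m = A ^ n := by
      rw [hmn, zpow_natCast]
    rw [hpow] at hy
    set y := Matrix.toEuclideanCLM (𝕜 := ℝ) (A ^ n) x with hydef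
    have hdetn : IsUnit ((A ^ n).det) := by
      rw [Matrix.det_pow]
      exact hdet.pow n
    have hxy : x = Matrix.toEuclideanCLM (𝕜 := ℝ) (A⁻¹ ^ n) y := by
      rw [hydef]
      have : Matrix.toEuclideanCLM (𝕜 := ℝ) (A⁻¹ ^ n)
            (Matrix.toEuclideanCLM (𝕜 := ℝ) (A ^ n) x)
          = Matrix.toEuclideanCLM (𝕜 := ℝ) (A⁻¹ ^ n * A ^ n) x := by
        rw [_root_.map_mul]; rfl
      rw [this, Matrix.inv_pow', Matrix.nonsing_inv_mul _ hdetn, _root_.map_one]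
      rfl
    have hmapinv : (A⁻¹ ^ n).map Complex.ofReal = C ^ n := by
      exact map_pow (RingHom.mapMatrix (Complex.ofRealHom) :
          Matrix (Fin d) (Fin d) ℝ →+* Matrix (Fin d) (Fin d) ℂ) A⁻¹ n
    have hclmpow : Matrix.toEuclideanCLM (𝕜 := ℂ) (C ^ n) = T ^ n := by
      rw [hT, map_pow]
    have hle : ‖x‖ ≤ ‖T ^ n‖ * ‖y‖ := by
      rw [hxy]
      calc ‖Matrix.toEuclideanCLM (𝕜 := ℝ) (A⁻¹ ^ n) y‖
          ≤ ‖Matrix.toEuclideanCLM (𝕜 := ℂ) ((A⁻¹ ^ n).map Complex.ofReal)‖ * ‖y‖ :=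
            aux_clm_real_le _ _
        _ = ‖T ^ n‖ * ‖y‖ := by rw [hmapinv, hclmpow]
    have hxδ : δ ≤ ‖x‖ := by
      have := Metric.infDist_le_dist_of_mem (x := 0) hx
      rwa [dist_zero_left] at this
    have hlt : ‖x‖ < δ := by
      calc ‖x‖ ≤ ‖T ^ n‖ * ‖y‖ := hle
        _ ≤ ‖T ^ n‖ * M1 := by
            exact mul_le_mul_of_nonneg_left (hRM1 y hy) (norm_nonneg _)
        _ < (δ / M1) * M1 := by
            exact mul_lt_mul_of_pos_right (hN0 n hnN) hM1pos
        _ = δ := div_mul_cancel₀ _ (ne_of_gt hM1pos)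
    exact absurd hxδ (not_le.mpr hlt)
  -- deduce disjointness
  intro j ℓ hjl
  rw [Set.disjoint_left]
  rintro a ⟨x, hx, hxa⟩ ⟨y, hy, hya⟩
  have hxy : Matrix.toEuclideanCLM (𝕜 := ℝ) (A ^ j) x
      = Matrix.toEuclideanCLM (𝕜 := ℝ) (A ^ ℓ) y := by rw [hxa, hya]
  have happ : ∀ (p q : ℤ) (v : EuclideanSpace ℝ (Fin d)),
      Matrix.toEuclideanCLM (𝕜 := ℝ) (A ^ p) (Matrix.toEuclideanCLM (𝕜 := ℝ) (A ^ q) v)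
        = Matrix.toEuclideanCLM (𝕜 := ℝ) (A ^ (p + q)) v := by
    intro p q v
    rw [Matrix.zpow_add hdet, _root_.map_mul]
    rfl
  have hm : Matrix.toEuclideanCLM (𝕜 := ℝ) (A ^ (j - ℓ)) x = y := by
    have h1 := congrArg (Matrix.toEuclideanCLM (𝕜 := ℝ) (A ^ (-ℓ))) hxy
    rw [happ, happ] at h1
    rw [show -ℓ + ℓ = 0 by ring, zpow_zero, _root_.map_one] at h1
    rw [show -ℓ + j = j - ℓ by ring] at h1
    exact h1
  rcases le_or_gt (max N0 1 : ℤ) (j - ℓ) with hcase | hcase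
  · exact hcore (j - ℓ) hcase x hx (hm ▸ hy)
  · have hneg : (max N0 1 : ℤ) ≤ -(j - ℓ) := by
      rcases abs_cases (j - ℓ) with ⟨h1, h2⟩ | ⟨h1, h2⟩ <;> omega
    have hx' : x = Matrix.toEuclideanCLM (𝕜 := ℝ) (A ^ (-(j - ℓ))) y := by
      have h1 := congrArg (Matrix.toEuclideanCLM (𝕜 := ℝ) (A ^ (-(j - ℓ)))) hm
      rw [happ] at h1
      rw [show -(j - ℓ) + (j - ℓ) = 0 by ring, zpow_zero, _root_.map_one] at h1
      exact h1.symm ▸ h1.symm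
    exact hcore (-(j - ℓ)) hneg y hy (hx' ▸ hx)
end

section
/- Let A be an expansive real d×d matrix, n ∈ ℕ, and β ∈ ℝ. Then the two-sided sequence (a_j)_{j∈ℤ} defined by a_j = |det A|^{jβ} · (1 + ‖A^j‖^n), where A^j denotes the j-th integer power of the invertible matrix A, is bounded if and only if β = 0 and n = 0. -/
/-- The operator norm of a real matrix acting on Euclidean space. -/
noncomputable def matNorm {ι : Type*} [Fintype ι] [DecidableEq ι] (M : Matrix ι ι ℝ) : ℝ :=
  ‖Matrix.toEuclideanCLM (𝕜 := ℝ) M‖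

lemma coord_le_norm {ι : Type*} [Fintype ι] (x : EuclideanSpace ℝ ι) (i : ι) : |x i| ≤ ‖x‖ := by
  rw [EuclideanSpace.norm_eq]
  have h : |x i| ^ 2 ≤ ∑ k, ‖x k‖ ^ 2 :=
    Finset.single_le_sum (f := fun k => ‖x k‖ ^ 2) (fun _ _ => sq_nonneg _) (Finset.mem_univ i)
      |>.trans_eq' (by rw [Real.norm_eq_abs])
  calc |x i| = Real.sqrt (|x i| ^ 2) := by rw [Real.sqrt_sq (abs_nonneg _)]
    _ ≤ _ := Real.sqrt_le_sqrt h

lemma entry_le_matNorm {d : ℕ} (M : Matrix (Fin d) (Fin d) ℝ) (i j : Fin d) :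
    |M i j| ≤ matNorm M := by
  have h := (Matrix.toEuclideanCLM (𝕜 := ℝ) M).le_opNorm (EuclideanSpace.single j 1)
  rw [EuclideanSpace.norm_single, norm_one, mul_one] at h
  refine le_trans ?_ h
  have hc : (Matrix.toEuclideanCLM (𝕜 := ℝ) M (EuclideanSpace.single j 1)) i = M i j := by
    have h3 := congrFun (Matrix.ofLp_toEuclideanCLM (𝕜 := ℝ) M (EuclideanSpace.single j 1)) i
    simpa [Matrix.toLin'_apply, Matrix.mulVec_single] using h3
  rw [← hc]
  exact coord_le_norm _ i

lemma one_lt_abs_det {d : ℕ} (hd : 0 < d) (A : Matrix (Fin d) (Fin d) ℝ)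
    (hA : ∀ μ : ℂ, IsEigenvalue A μ → 1 < ‖μ‖) : 1 < |A.det| := by
  set B := A.map (Complex.ofReal) with hB
  have hdet : (B.det) = (A.det : ℂ) := by
    exact (RingHom.map_det Complex.ofRealHom A).symm
  have hprod : B.det = B.charpoly.roots.prod := Matrix.det_eq_prod_roots_charpoly B
  have hcard : Multiset.card B.charpoly.roots = d := by
    have hsp : B.charpoly.Splits := IsAlgClosed.splits _
    rw [Polynomial.splits_iff_card_roots.mp hsp, Matrix.charpoly_natDegree_eq_dim, Fintype.card_fin]
  have hne : B.charpoly.roots ≠ 0 := by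
    intro h
    rw [h] at hcard
    simp at hcard
    omega
  obtain ⟨μ, hμ⟩ := Multiset.exists_mem_of_ne_zero hne
  obtain ⟨s, hs⟩ := Multiset.exists_cons_of_mem hμ
  have habs : |A.det| = ‖B.det‖ := by
    rw [hdet, Complex.norm_real, Real.norm_eq_abs]
  have hroot : ∀ x ∈ B.charpoly.roots, 1 < ‖x‖ := by
    intro x hx
    exact hA x ((Polynomial.mem_roots'.mp hx).2)
  rw [habs, hprod, hs, Multiset.prod_cons, norm_mul]
  have h1 : 1 < ‖μ‖ := hroot μ hμ
  have h2 : 1 ≤ ‖s.prod‖ := by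
    rw [show ‖s.prod‖ = (s.map norm).prod from map_multiset_prod (normHom : ℂ →*₀ ℝ) s]
    refine Multiset.one_le_prod ?_
    intro x hx
    obtain ⟨y, hy, rfl⟩ := Multiset.mem_map.mp hx
    exact (hroot y (by rw [hs]; exact Multiset.mem_cons_of_mem hy)).le
  exact one_lt_mul_of_lt_of_le h1 h2


/-- For an expansive matrix `A`, `n ∈ ℕ`, `β ∈ ℝ`, the two-sided sequence
`a_j = |det A|^{jβ} (1 + ‖A^j‖^n)` (with `j ∈ ℤ` and integer matrix powers) is bounded if and
only if `β = 0` and `n = 0`. -/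
theorem two_sided_sequence_bounded_iff
    (d : ℕ) (hd : 0 < d) (A : Matrix (Fin d) (Fin d) ℝ) (hA : IsExpansive A)
    (n : ℕ) (β : ℝ) :
    (∃ M : ℝ, ∀ j : ℤ, |A.det| ^ ((j : ℝ) * β) * (1 + matNorm (A ^ j) ^ n) ≤ M)
      ↔ (β = 0 ∧ n = 0) := by
  have hD : (1 : ℝ) < |A.det| := one_lt_abs_det hd A hA.2
  have hDpos : (0 : ℝ) < |A.det| := lt_trans one_pos hD
  constructor
  · rintro ⟨M, hM⟩
    have hge1 : ∀ j : ℤ, (1 : ℝ) ≤ 1 + matNorm (A ^ j) ^ n := fun j =>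
      le_add_of_nonneg_right (pow_nonneg (norm_nonneg _) n)
    -- key: the pure exponential part is bounded
    have hDle : ∀ j : ℤ, |A.det| ^ ((j : ℝ) * β) ≤ M := by
      intro j
      refine le_trans ?_ (hM j)
      exact le_mul_of_one_le_right (Real.rpow_pos_of_pos hDpos _).le (hge1 j)
    have hβ : β = 0 := by
      by_contra hβ
      have habsβ : 0 < |β| := abs_pos.mpr hβ
      have hc : (1 : ℝ) < |A.det| ^ |β| :=
        Real.one_lt_rpow_iff_of_pos hDpos |>.mpr (Or.inl ⟨hD, habsβ⟩)
      obtain ⟨k, hk⟩ := pow_unbounded_of_one_lt M hc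
      set j : ℤ := if 0 < β then (k : ℤ) else -(k : ℤ) with hj
      have hexp : (j : ℝ) * β = (k : ℝ) * |β| := by
        rcases lt_or_ge 0 β with h | h
        · rw [hj, if_pos h, abs_of_pos h]; push_cast; ring
        · rw [hj, if_neg (not_lt.mpr h), abs_of_nonpos h]; push_cast; ring
      have : |A.det| ^ ((j : ℝ) * β) = (|A.det| ^ |β|) ^ k := by
        rw [hexp, mul_comm, Real.rpow_mul hDpos.le, ← Real.rpow_natCast (|A.det| ^ |β|) k]
      have hlt : M < |A.det| ^ ((j : ℝ) * β) := this ▸ hk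
      exact absurd (hDle j) (not_le.mpr hlt)
    subst hβ
    refine ⟨rfl, ?_⟩
    by_contra hn
    -- with β = 0 the hypothesis says 1 + ‖A^j‖^n ≤ M
    have hn' : ∀ j : ℤ, matNorm (A ^ j) ^ n ≤ M - 1 := by
      intro j
      have := hM j
      rw [mul_zero, Real.rpow_zero, one_mul] at this
      linarith
    set C : ℝ := max 1 (M - 1) with hC
    have hC1 : (1 : ℝ) ≤ C := le_max_left _ _
    have hnormC : ∀ j : ℤ, matNorm (A ^ j) ≤ C := by
      intro j
      rcases le_or_gt (matNorm (A ^ j)) 1 with h | h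
      · exact h.trans hC1
      · refine le_trans (le_self_pow₀ h.le hn) ?_
        exact (hn' j).trans (le_max_right _ _)
    -- determinant growth contradiction
    have hdetle : ∀ k : ℕ, |A.det| ^ k ≤ (d.factorial : ℝ) * C ^ d := by
      intro k
      have h1 : |(A ^ (k : ℤ)).det| ≤ (d.factorial : ℝ) * C ^ d := by
        have := Matrix.det_le (A := A ^ (k : ℤ)) (abv := AbsoluteValue.abs) (x := C)
          (fun i l => by simpa using (entry_le_matNorm _ i l).trans (hnormC k))
        simpa [Fintype.card_fin, nsmul_eq_mul] using this
      rwa [zpow_natCast, Matrix.det_pow, abs_pow] at h1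
    obtain ⟨k, hk⟩ := pow_unbounded_of_one_lt ((d.factorial : ℝ) * C ^ d) hD
    exact lt_irrefl _ ((hdetle k).trans_lt hk)
  · rintro ⟨rfl, rfl⟩
    refine ⟨2, fun j => ?_⟩
    rw [mul_zero, Real.rpow_zero, one_mul, pow_zero]
    norm_num
end

section
/- Let A be an expansive real d×d matrix, let λ_max(A) denote the maximum of |λ| over the complex eigenvalues λ of A, let n ∈ ℕ and ν ∈ ℝ. If the sequence (a_j)_{j∈ℕ} defined by a_j = |det A|^{−jν} · (1 + ‖A^j‖^n) is bounded, then ν ≥ 0 and n · ln(λ_max(A)) ≤ ν · ln|det A|. -/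
/-- `lmax` is the maximum of `|λ|` over the complex eigenvalues `λ` of `A`. -/
def IsMaxEigAbs {d : ℕ} (A : Matrix (Fin d) (Fin d) ℝ) (lmax : ℝ) : Prop :=
  (∃ μ : ℂ, IsEigenvalue A μ ∧ ‖μ‖ = lmax) ∧
  ∀ μ : ℂ, IsEigenvalue A μ → ‖μ‖ ≤ lmax

lemma sum_sq_mulVec_le {d : ℕ} (M : Matrix (Fin d) (Fin d) ℝ) (x : Fin d → ℝ) :
    ∑ i, (M.mulVec x i) ^ 2 ≤ matNorm M ^ 2 * ∑ i, (x i) ^ 2 := by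
  set ex : EuclideanSpace ℝ (Fin d) := (WithLp.equiv 2 (Fin d → ℝ)).symm x with hex
  have h1 : Matrix.toEuclideanCLM (𝕜 := ℝ) M ex
      = (WithLp.equiv 2 (Fin d → ℝ)).symm (M.mulVec x) := by
    rw [hex]
    rfl
  have h2 : ‖(WithLp.equiv 2 (Fin d → ℝ)).symm (M.mulVec x)‖ ≤ matNorm M * ‖ex‖ := by
    rw [← h1]
    exact (Matrix.toEuclideanCLM (𝕜 := ℝ) M).le_opNorm ex
  have hsq : ∀ y : Fin d → ℝ,
      ‖(WithLp.equiv 2 (Fin d → ℝ)).symm y‖ ^ 2 = ∑ i, (y i) ^ 2 := by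
    intro y
    rw [EuclideanSpace.norm_eq, Real.sq_sqrt (by positivity)]
    simp [sq_abs]
  calc ∑ i, (M.mulVec x i) ^ 2
      = ‖(WithLp.equiv 2 (Fin d → ℝ)).symm (M.mulVec x)‖ ^ 2 := (hsq _).symm
    _ ≤ (matNorm M * ‖ex‖) ^ 2 := by
        apply pow_le_pow_left₀ (norm_nonneg _) h2
    _ = matNorm M ^ 2 * ∑ i, (x i) ^ 2 := by
        rw [mul_pow, hex, hsq]

lemma exists_eigenvector {d : ℕ} {A : Matrix (Fin d) (Fin d) ℝ} {μ : ℂ}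
    (hμ : IsEigenvalue A μ) :
    ∃ v : Fin d → ℂ, v ≠ 0 ∧ (A.map (Complex.ofReal)).mulVec v = μ • v := by
  set B := A.map (Complex.ofReal) with hB
  have hdet : (μ • (1 : Matrix (Fin d) (Fin d) ℂ) - B).det = 0 := by
    have h1 : Polynomial.eval μ B.charpoly = 0 := hμ
    rw [Matrix.charpoly] at h1
    have h2 := RingHom.map_det (Polynomial.evalRingHom μ) (Matrix.charmatrix B)
    have h3 : (Matrix.charmatrix B).map (Polynomial.evalRingHom μ)
        = μ • (1 : Matrix (Fin d) (Fin d) ℂ) - B := by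
      ext i j
      by_cases h : i = j
      · subst h
        simp [Matrix.charmatrix_apply_eq, Matrix.one_apply]
      · simp [Matrix.charmatrix_apply_ne _ _ _ h, Matrix.one_apply_ne h]
    rw [← h3]
    rw [RingHom.mapMatrix_apply] at h2
    rw [← h2]
    exact h1
  obtain ⟨v, hv0, hv⟩ := (Matrix.exists_mulVec_eq_zero_iff).mpr hdet
  refine ⟨v, hv0, ?_⟩
  have := hv
  rw [Matrix.sub_mulVec, Matrix.smul_mulVec, Matrix.one_mulVec, sub_eq_zero] at this
  exact this.symm

lemma eig_pow_le_norm {d : ℕ} {A : Matrix (Fin d) (Fin d) ℝ} {μ : ℂ}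
    (hμ : IsEigenvalue A μ) (j : ℕ) :
    ‖μ‖ ^ j ≤ matNorm (A ^ j) := by
  obtain ⟨v, hv0, hv⟩ := exists_eigenvector hμ
  set B := A.map (Complex.ofReal) with hB
  have hBj : ∀ k : ℕ, B ^ k = (A ^ k).map (Complex.ofReal) := by
    intro k
    have : (Complex.ofRealHom.mapMatrix (A ^ k) : Matrix (Fin d) (Fin d) ℂ)
        = (Complex.ofRealHom.mapMatrix A) ^ k := map_pow _ _ _
    exact this.symm
  have hpow : ∀ k : ℕ, (B ^ k).mulVec v = μ ^ k • v := by
    intro k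
    induction k with
    | zero => simp [Matrix.one_mulVec]
    | succ m ih =>
      rw [pow_succ', ← Matrix.mulVec_mulVec, ih, Matrix.mulVec_smul, hv,
        smul_smul, ← pow_succ]
  -- coordinates
  set u : Fin d → ℝ := fun i => (v i).re with hu
  set w : Fin d → ℝ := fun i => (v i).im with hw
  have hre : (A ^ j).mulVec u = fun i => (μ ^ j * v i).re := by
    funext i
    have h1 : ((A ^ j).map (Complex.ofReal)).mulVec v i = μ ^ j * v i := by
      rw [← hBj]; rw [hpow j]; simp
    have h2 : (((A ^ j).map (Complex.ofReal)).mulVec v i).re = (A ^ j).mulVec u i := by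
      simp only [Matrix.mulVec, dotProduct, Matrix.map_apply]
      rw [Complex.re_sum]
      congr 1; funext k
      simp [hu, Complex.mul_re]
    rw [← h2, h1]
  have him : (A ^ j).mulVec w = fun i => (μ ^ j * v i).im := by
    funext i
    have h1 : ((A ^ j).map (Complex.ofReal)).mulVec v i = μ ^ j * v i := by
      rw [← hBj]; rw [hpow j]; simp
    have h2 : (((A ^ j).map (Complex.ofReal)).mulVec v i).im = (A ^ j).mulVec w i := by
      simp only [Matrix.mulVec, dotProduct, Matrix.map_apply]
      rw [Complex.im_sum]
      congr 1; funext k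
      simp [hw, Complex.mul_im]
    rw [← h2, h1]
  set S : ℝ := ∑ i, Complex.normSq (v i) with hS
  have hSpos : 0 < S := by
    obtain ⟨i, hi⟩ := Function.ne_iff.mp hv0
    refine Finset.sum_pos' (fun k _ => Complex.normSq_nonneg _) ⟨i, Finset.mem_univ i, ?_⟩
    exact Complex.normSq_pos.mpr hi
  have hsum : ∀ i, (u i) ^ 2 + (w i) ^ 2 = Complex.normSq (v i) := by
    intro i; simp [hu, hw, Complex.normSq_apply, sq]
  have key : (‖μ‖ ^ j) ^ 2 * S ≤ matNorm (A ^ j) ^ 2 * S := by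
    have hL : (‖μ‖ ^ j) ^ 2 * S = ∑ i, ((μ ^ j * v i).re ^ 2 + (μ ^ j * v i).im ^ 2) := by
      rw [hS, Finset.mul_sum]
      congr 1; funext i
      have hns : (μ ^ j * v i).re ^ 2 + (μ ^ j * v i).im ^ 2 = Complex.normSq (μ ^ j * v i) := by
        rw [Complex.normSq_apply]; ring
      rw [hns, map_mul Complex.normSq, ← Complex.sq_norm (μ ^ j), norm_pow]
    have hR := sum_sq_mulVec_le (A ^ j) u
    have hR' := sum_sq_mulVec_le (A ^ j) w
    calc (‖μ‖ ^ j) ^ 2 * S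
        = ∑ i, ((μ ^ j * v i).re ^ 2 + (μ ^ j * v i).im ^ 2) := hL
      _ = (∑ i, ((A ^ j).mulVec u i) ^ 2) + ∑ i, ((A ^ j).mulVec w i) ^ 2 := by
          rw [← Finset.sum_add_distrib, hre, him]
      _ ≤ matNorm (A ^ j) ^ 2 * (∑ i, (u i) ^ 2) + matNorm (A ^ j) ^ 2 * ∑ i, (w i) ^ 2 :=
          add_le_add hR hR'
      _ = matNorm (A ^ j) ^ 2 * S := by
          rw [← mul_add, ← Finset.sum_add_distrib, hS]
          congr 1
          exact Finset.sum_congr rfl fun i _ => hsum i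
  have h2 : (‖μ‖ ^ j) ^ 2 ≤ matNorm (A ^ j) ^ 2 :=
    le_of_mul_le_mul_right key hSpos
  have hnn : (0:ℝ) ≤ ‖μ‖ ^ j := pow_nonneg (norm_nonneg μ) j
  exact (pow_le_pow_iff_left₀ hnn (norm_nonneg _) two_ne_zero).mp h2

lemma lmax_le_abs_det {d : ℕ} {A : Matrix (Fin d) (Fin d) ℝ} {lmax : ℝ}
    (hall : ∀ μ : ℂ, IsEigenvalue A μ → 1 < ‖μ‖)
    {μ0 : ℂ} (h0 : IsEigenvalue A μ0) (habs : ‖μ0‖ = lmax) :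
    lmax ≤ |A.det| := by
  set B := A.map (Complex.ofReal) with hB
  have hdet : B.det = (A.det : ℂ) := by
    have : Complex.ofRealHom A.det = ((Complex.ofRealHom.mapMatrix A) : Matrix (Fin d) (Fin d) ℂ).det :=
      RingHom.map_det Complex.ofRealHom A
    rw [RingHom.mapMatrix_apply] at this
    exact this.symm
  have habsdet : ‖B.det‖ = |A.det| := by
    rw [hdet, Complex.norm_real, Real.norm_eq_abs]
  have hroots : B.det = B.charpoly.roots.prod := Matrix.det_eq_prod_roots_charpoly B
  have hne : B.charpoly ≠ 0 := (Matrix.charpoly_monic B).ne_zero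
  have hmem : μ0 ∈ B.charpoly.roots := by
    rw [Polynomial.mem_roots hne]
    exact h0
  obtain ⟨t, ht⟩ := Multiset.exists_cons_of_mem hmem
  have hprod : ‖B.det‖ = ‖μ0‖ * (t.map (fun z : ℂ => ‖z‖)).prod := by
    rw [hroots, ht, Multiset.prod_cons, norm_mul]
    congr 1
    exact map_multiset_prod (normHom (α := ℂ)) t
  have hone : 1 ≤ (t.map (fun z : ℂ => ‖z‖)).prod := by
    apply Multiset.one_le_prod
    intro a ha
    obtain ⟨μ, hμt, rfl⟩ := Multiset.mem_map.mp ha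
    have : μ ∈ B.charpoly.roots := by rw [ht]; exact Multiset.mem_cons_of_mem hμt
    exact le_of_lt (hall μ ((Polynomial.mem_roots hne).mp this))
  calc lmax = ‖μ0‖ * 1 := by rw [habs, mul_one]
    _ ≤ ‖μ0‖ * (t.map (fun z : ℂ => ‖z‖)).prod :=
        mul_le_mul_of_nonneg_left hone (norm_nonneg _)
    _ = |A.det| := by rw [← hprod, habsdet]

/-- For an expansive matrix `A` with maximal eigenvalue modulus `λ_max`,
`n ∈ ℕ` and `ν ∈ ℝ`: if the sequence `a_j = |det A|^{−jν} (1 + ‖A^j‖^n)` (over `j ∈ ℕ`)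
is bounded, then `ν ≥ 0` and `n ln λ_max ≤ ν ln|det A|`. -/
theorem bounded_sequence_necessary
    (d : ℕ) (A : Matrix (Fin d) (Fin d) ℝ) (hA : IsExpansive A)
    (lmax : ℝ) (hmax : IsMaxEigAbs A lmax)
    (n : ℕ) (ν : ℝ)
    (hbdd : ∃ M : ℝ, ∀ j : ℕ, |A.det| ^ (-(j : ℝ) * ν) * (1 + matNorm (A ^ j) ^ n) ≤ M) :
    0 ≤ ν ∧ (n : ℝ) * Real.log lmax ≤ ν * Real.log |A.det| := by
  obtain ⟨μ0, hμ0, habs0⟩ := hmax.1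
  have hlmax : 1 < lmax := habs0 ▸ hA.2 μ0 hμ0
  have hD : 1 < |A.det| := lt_of_lt_of_le hlmax (lmax_le_abs_det hA.2 hμ0 habs0)
  have hD0 : (0:ℝ) < |A.det| := lt_trans one_pos hD
  obtain ⟨M, hM⟩ := hbdd
  set D := |A.det| with hDdef
  -- rewrite rpow as pow
  have hrw : ∀ j : ℕ, D ^ (-(j : ℝ) * ν) = (D ^ (-ν)) ^ j := by
    intro j
    rw [← Real.rpow_natCast (D ^ (-ν)) j, ← Real.rpow_mul (le_of_lt hD0)]
    ring_nf
  have hg0 : ∀ j : ℕ, (0:ℝ) < D ^ (-(j : ℝ) * ν) := fun j => Real.rpow_pos_of_pos hD0 _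
  have hone_le : ∀ j : ℕ, (1:ℝ) ≤ 1 + matNorm (A ^ j) ^ n := by
    intro j
    have : (0:ℝ) ≤ matNorm (A ^ j) ^ n := pow_nonneg (norm_nonneg _) n
    linarith
  -- ν ≥ 0
  have hν : 0 ≤ ν := by
    by_contra hν
    push_neg at hν
    have hgt : 1 < D ^ (-ν) := (Real.one_lt_rpow_iff_of_pos hD0).mpr (Or.inl ⟨hD, by linarith⟩)
    obtain ⟨j, hj⟩ := pow_unbounded_of_one_lt M hgt
    have := hM j
    have h1 : (D ^ (-ν)) ^ j ≤ D ^ (-(j : ℝ) * ν) * (1 + matNorm (A ^ j) ^ n) := by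
      rw [← hrw j]
      exact le_mul_of_one_le_right (le_of_lt (hg0 j)) (hone_le j)
    linarith
  refine ⟨hν, ?_⟩
  -- second part
  set r : ℝ := lmax ^ n * D ^ (-ν) with hr
  have hrpos : 0 < r := mul_pos (pow_pos (lt_trans one_pos hlmax) n) (Real.rpow_pos_of_pos hD0 _)
  have hrj : ∀ j : ℕ, r ^ j ≤ M := by
    intro j
    have hln : lmax ^ j ≤ matNorm (A ^ j) := habs0 ▸ eig_pow_le_norm hμ0 j
    have hlnn : (lmax ^ j) ^ n ≤ matNorm (A ^ j) ^ n :=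
      pow_le_pow_left₀ (pow_nonneg (by linarith) j) hln n
    have h1 : r ^ j = (lmax ^ n) ^ j * D ^ (-(j : ℝ) * ν) := by
      rw [hr, mul_pow, hrw j]
    have h2 : (lmax ^ n) ^ j = (lmax ^ j) ^ n := by
      rw [← pow_mul, ← pow_mul, Nat.mul_comm]
    have h3 : r ^ j ≤ D ^ (-(j : ℝ) * ν) * (1 + matNorm (A ^ j) ^ n) := by
      rw [h1, h2, mul_comm]
      apply mul_le_mul_of_nonneg_left _ (le_of_lt (hg0 j))
      calc (lmax ^ j) ^ n ≤ matNorm (A ^ j) ^ n := hlnn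
        _ ≤ 1 + matNorm (A ^ j) ^ n := by linarith
    exact le_trans h3 (hM j)
  have hr1 : r ≤ 1 := by
    by_contra hr1
    push_neg at hr1
    obtain ⟨j, hj⟩ := pow_unbounded_of_one_lt M hr1
    exact absurd (hrj j) (not_le.mpr hj)
  -- from r ≤ 1 : lmax ^ n ≤ D ^ ν
  have hpow : lmax ^ n ≤ D ^ ν := by
    have h1 : lmax ^ n * (D ^ (-ν) * D ^ ν) ≤ 1 * D ^ ν := by
      rw [← mul_assoc]
      exact mul_le_mul_of_nonneg_right hr1 (le_of_lt (Real.rpow_pos_of_pos hD0 _))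
    rwa [← Real.rpow_add hD0, neg_add_cancel, Real.rpow_zero, mul_one, one_mul] at h1
  have hlog := Real.log_le_log (pow_pos (lt_trans one_pos hlmax) n) hpow
  rwa [Real.log_pow, Real.log_rpow hD0] at hlog
end

section
/- Let k, m ≥ 1, let λ > 1 be real, and let B be a real m×m matrix all of whose complex eigenvalues μ (roots of its characteristic polynomial over ℂ) satisfy 1 < |μ| < λ. Let A be the (k+m)×(k+m) block diagonal matrix with blocks λ·I_k and B, let n ∈ ℕ and let ν ≥ 0 be real with n · ln λ = ν · ln|det A|. Then the sequence (a_j)_{j∈ℕ} defined by a_j = |det A|^{−jν} · (1 + ‖A^j‖^n) is bounded. -/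
section ANDaux

attribute [local instance]
  Matrix.frobeniusSeminormedAddCommGroup Matrix.frobeniusNormedAddCommGroup
  Matrix.frobeniusNormedSpace Matrix.frobeniusNormedRing Matrix.frobeniusNormedAlgebra
  Matrix.frobeniusIsBoundedSMul

open Filter Topology

private lemma matNorm_nonneg' {ι : Type*} [Fintype ι] [DecidableEq ι] (M : Matrix ι ι ℝ) :
    0 ≤ matNorm M := norm_nonneg _

private lemma matNorm_le_frobenius {ι : Type*} [Fintype ι] [DecidableEq ι]
    (M : Matrix ι ι ℝ) : matNorm M ≤ ‖M‖ := by
  refine ContinuousLinearMap.opNorm_le_bound _ (norm_nonneg M) fun x => ?_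
  have hx : x = (WithLp.equiv 2 (ι → ℝ)).symm (WithLp.equiv 2 (ι → ℝ) x) := rfl
  rw [hx, show (Matrix.toEuclideanCLM (𝕜 := ℝ) M : EuclideanSpace ℝ ι →L[ℝ] EuclideanSpace ℝ ι) ((WithLp.equiv 2 (ι → ℝ)).symm (WithLp.equiv 2 (ι → ℝ) x)) =
      (WithLp.equiv 2 (ι → ℝ)).symm (Matrix.toLin' M (WithLp.equiv 2 (ι → ℝ) x)) from rfl]
  set y : ι → ℝ := WithLp.equiv 2 (ι → ℝ) x with hy
  have hnx : ‖(WithLp.equiv 2 (ι → ℝ)).symm y‖ = Real.sqrt (∑ i, (y i) ^ 2) := by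
    rw [EuclideanSpace.norm_eq]
    congr 1
    refine Finset.sum_congr rfl fun i _ => ?_
    rw [WithLp.equiv_symm_apply, PiLp.toLp_apply, Real.norm_eq_abs, sq_abs]
  have hnM : ‖M‖ = Real.sqrt (∑ i, ∑ j, (M i j) ^ 2) := by
    rw [Matrix.frobenius_norm_def, Real.sqrt_eq_rpow]
    congr 1
    refine Finset.sum_congr rfl fun i _ => Finset.sum_congr rfl fun j _ => ?_
    rw [Real.rpow_two, Real.norm_eq_abs, sq_abs]
  have hAx : ‖(WithLp.equiv 2 (ι → ℝ)).symm (M.mulVec y)‖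
      = Real.sqrt (∑ i, (M.mulVec y i) ^ 2) := by
    rw [EuclideanSpace.norm_eq]
    congr 1
    refine Finset.sum_congr rfl fun i _ => ?_
    rw [WithLp.equiv_symm_apply, PiLp.toLp_apply, Real.norm_eq_abs, sq_abs]
  rw [show (Matrix.toLin' M) y = M.mulVec y from rfl, hAx, hnx, hnM,
    ← Real.sqrt_mul (by positivity)]
  refine Real.sqrt_le_sqrt ?_
  rw [Finset.sum_mul]
  refine Finset.sum_le_sum fun i _ => ?_
  have := Finset.sum_mul_sq_le_sq_mul_sq Finset.univ (fun j => M i j) y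
  simpa [Matrix.mulVec, dotProduct] using this

private lemma bounded_of_eventually (f : ℕ → ℝ) :
    ∀ (N : ℕ) (c : ℝ), (∀ j, N ≤ j → f j ≤ c) → ∃ M, ∀ j, f j ≤ M := by
  intro N
  induction N with
  | zero => exact fun c h => ⟨c, fun j => h j (Nat.zero_le j)⟩
  | succ N ih =>
    intro c h
    refine ih (max c (f N)) fun j hj => ?_
    rcases eq_or_lt_of_le hj with rfl | hlt
    · exact le_max_right _ _
    · exact (h j hlt).trans (le_max_left _ _)

private lemma fromBlocks_diag_pow {R : Type*} [CommRing R] {k m : ℕ}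
    (P : Matrix (Fin k) (Fin k) R) (Q : Matrix (Fin m) (Fin m) R) (j : ℕ) :
    (Matrix.fromBlocks P 0 0 Q) ^ j = Matrix.fromBlocks (P ^ j) 0 0 (Q ^ j) := by
  induction j with
  | zero => simp [Matrix.fromBlocks_one]
  | succ j ih =>
    rw [pow_succ, pow_succ, pow_succ, ih, Matrix.fromBlocks_multiply]
    simp

private lemma frobenius_fromBlocks_le {k m : ℕ}
    (P : Matrix (Fin k) (Fin k) ℝ) (Q : Matrix (Fin m) (Fin m) ℝ) :
    ‖Matrix.fromBlocks P 0 0 Q‖ ≤ ‖P‖ + ‖Q‖ := by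
  have h1 : ‖(Matrix.fromBlocks P 0 0 0 : Matrix (Fin k ⊕ Fin m) (Fin k ⊕ Fin m) ℝ)‖ = ‖P‖ := by
    rw [Matrix.frobenius_norm_def, Matrix.frobenius_norm_def]
    congr 1
    simp [Fintype.sum_sum_type, Real.zero_rpow]
  have h2 : ‖(Matrix.fromBlocks 0 0 0 Q : Matrix (Fin k ⊕ Fin m) (Fin k ⊕ Fin m) ℝ)‖ = ‖Q‖ := by
    rw [Matrix.frobenius_norm_def, Matrix.frobenius_norm_def]
    congr 1
    simp [Fintype.sum_sum_type, Real.zero_rpow]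
  have h3 : (Matrix.fromBlocks P 0 0 Q : Matrix (Fin k ⊕ Fin m) (Fin k ⊕ Fin m) ℝ)
      = Matrix.fromBlocks P 0 0 0 + Matrix.fromBlocks 0 0 0 Q := by
    rw [Matrix.fromBlocks_add]; simp
  rw [h3]
  exact (norm_add_le _ _).trans (by rw [h1, h2])

private lemma isRoot_charpoly_of_mem_spectrum {m : ℕ} (C : Matrix (Fin m) (Fin m) ℂ) (μ : ℂ)
    (h : μ ∈ spectrum ℂ C) : C.charpoly.IsRoot μ := by
  rw [spectrum.mem_iff] at h
  have hdet : (Matrix.scalar (Fin m) μ - C).det = 0 := by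
    by_contra hd
    exact h ((Matrix.isUnit_iff_isUnit_det _).mpr (isUnit_iff_ne_zero.mpr hd))
  have hev : C.charpoly.eval μ = (Matrix.scalar (Fin m) μ - C).det := by
    rw [Matrix.charpoly, ← Polynomial.coe_evalRingHom, RingHom.map_det]
    congr 1
    ext i j
    by_cases hij : i = j
    · subst hij
      simp [Matrix.charmatrix_apply_eq, Matrix.scalar_apply, Matrix.diagonal_apply_eq,
        Matrix.sub_apply]
    · simp [Matrix.charmatrix_apply_ne _ _ _ hij, Matrix.scalar_apply,
        Matrix.diagonal_apply_ne _ hij, Matrix.sub_apply]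
  rwa [Polynomial.IsRoot, hev]

private lemma frobenius_pow_eventually_le {m : ℕ} (hm : 1 ≤ m)
    (C : Matrix (Fin m) (Fin m) ℂ) (t : NNReal)
    (h : ∀ z ∈ spectrum ℂ C, ‖z‖₊ < t) :
    ∀ᶠ j in atTop, ‖C ^ j‖ ≤ (t : ℝ) ^ j := by
  haveI : Nonempty (Fin m) := ⟨⟨0, hm⟩⟩
  haveI : CompleteSpace (Matrix (Fin m) (Fin m) ℂ) := FiniteDimensional.complete ℂ _
  have h2 : spectralRadius ℂ C < (t : ENNReal) := spectrum.spectralRadius_lt_of_forall_lt C h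
  have h3 := spectrum.pow_nnnorm_pow_one_div_tendsto_nhds_spectralRadius C
  have hev := h3.eventually_lt_const h2
  filter_upwards [hev, eventually_ge_atTop 1] with j hj hj1
  have hj0 : (j : ℝ) ≠ 0 := by positivity
  have hlt : (‖C ^ j‖₊ : ENNReal) < (t : ENNReal) ^ (j : ℝ) := by
    calc (‖C ^ j‖₊ : ENNReal) = ((‖C ^ j‖₊ : ENNReal) ^ (1 / (j : ℝ))) ^ (j : ℝ) := by
          rw [← ENNReal.rpow_mul, one_div, inv_mul_cancel₀ hj0, ENNReal.rpow_one]
      _ < (t : ENNReal) ^ (j : ℝ) := ENNReal.rpow_lt_rpow hj (by positivity)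
  rw [ENNReal.rpow_natCast, ← ENNReal.coe_pow, ENNReal.coe_lt_coe] at hlt
  calc ‖C ^ j‖ = ((‖C ^ j‖₊ : NNReal) : ℝ) := rfl
    _ ≤ ((t ^ j : NNReal) : ℝ) := by exact_mod_cast hlt.le
    _ = (t : ℝ) ^ j := by push_cast; ring

/-- Let `λ > 1` and let `B` be an `m×m` real matrix all of whose complex
eigenvalues `μ` satisfy `1 < |μ| < λ`. Let `A = diag(λ I_k, B)` be the corresponding block
diagonal `(k+m)×(k+m)` matrix, and let `n ∈ ℕ`, `ν ≥ 0` satisfy `n ln λ = ν ln|det A|`.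
Then the sequence `a_j = |det A|^{−jν} (1 + ‖A^j‖^n)` (over `j ∈ ℕ`) is bounded. -/
theorem AND_borderline_sequence_bounded
    (k m : ℕ) (hk : 1 ≤ k) (hm : 1 ≤ m) (lam : ℝ) (hlam : 1 < lam)
    (B : Matrix (Fin m) (Fin m) ℝ)
    (hB : ∀ μ : ℂ, ((B.map (Complex.ofReal)).charpoly).IsRoot μ →
      1 < ‖μ‖ ∧ ‖μ‖ < lam)
    (n : ℕ) (ν : ℝ) (hν : 0 ≤ ν)
    (A : Matrix (Fin k ⊕ Fin m) (Fin k ⊕ Fin m) ℝ)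
    (hA : A = Matrix.fromBlocks (lam • (1 : Matrix (Fin k) (Fin k) ℝ)) 0 0 B)
    (heq : (n : ℝ) * Real.log lam = ν * Real.log |A.det|) :
    ∃ M : ℝ, ∀ j : ℕ, |A.det| ^ (-(j : ℝ) * ν) * (1 + matNorm (A ^ j) ^ n) ≤ M := by
  subst hA
  have hlam0 : (0 : ℝ) < lam := lt_trans one_pos hlam
  set CB : Matrix (Fin m) (Fin m) ℂ := B.map ⇑Complex.ofRealHom with hCBdef
  have hCBeq : B.map Complex.ofReal = CB := rfl
  have hchar0 : CB.charpoly ≠ 0 := CB.charpoly_monic.ne_zero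
  have hroot : ∀ μ ∈ CB.charpoly.roots, 1 < ‖μ‖ ∧ ‖μ‖ < lam := by
    intro μ hμ
    exact hB μ ((Polynomial.mem_roots hchar0).mp hμ)
  -- determinant is nonzero
  have hdetCB : CB.det ≠ 0 := by
    rw [Matrix.det_eq_prod_roots_charpoly CB]
    refine Multiset.prod_ne_zero fun h0 => ?_
    have h1 := (hroot 0 h0).1
    norm_num at h1
  have hdetB : B.det ≠ 0 := by
    intro h
    apply hdetCB
    have h2 : CB.det = Complex.ofRealHom B.det := by
      rw [hCBdef, ← RingHom.mapMatrix_apply, ← RingHom.map_det]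
    rw [h2, h, map_zero]
  have hdetA : (Matrix.fromBlocks (lam • (1 : Matrix (Fin k) (Fin k) ℝ)) 0 0 B).det ≠ 0 := by
    rw [Matrix.det_fromBlocks_zero₂₁]
    rw [Matrix.det_smul, Matrix.det_one, mul_one]
    exact mul_ne_zero (pow_ne_zero _ hlam0.ne') hdetB
  set D := |(Matrix.fromBlocks (lam • (1 : Matrix (Fin k) (Fin k) ℝ)) 0 0 B).det| with hDdef
  have hDpos : 0 < D := abs_pos.mpr hdetA
  have hkey : D ^ ν = lam ^ n := by
    rw [Real.rpow_def_of_pos hDpos, mul_comm, ← heq, mul_comm, ← Real.rpow_def_of_pos hlam0,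
      Real.rpow_natCast]
  -- spectral bound for CB
  set t : NNReal := ⟨lam, hlam0.le⟩ with htdef
  have htc : (t : ℝ) = lam := rfl
  have hspec : ∀ z ∈ spectrum ℂ CB, ‖z‖₊ < t := by
    intro z hz
    have hzr := isRoot_charpoly_of_mem_spectrum CB z hz
    have h2 := (hB z hzr).2
    rw [← NNReal.coe_lt_coe, htc]
    have h1 : (‖z‖₊ : ℝ) = ‖z‖ := by simp
    rw [h1]
    exact h2
  obtain ⟨N, hN⟩ := Filter.eventually_atTop.mp (frobenius_pow_eventually_le hm CB t hspec)
  obtain ⟨M0, hM0⟩ := bounded_of_eventually (fun j => ‖CB ^ j‖ / lam ^ j) N 1 (by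
    intro j hj
    rw [div_le_one (by positivity)]
    calc ‖CB ^ j‖ ≤ (t : ℝ) ^ j := hN j hj
      _ = lam ^ j := by rw [htc])
  have hCBj : ∀ j, ‖CB ^ j‖ ≤ M0 * lam ^ j := by
    intro j
    have h1 := hM0 j
    rw [div_le_iff₀ (by positivity)] at h1
    linarith [h1]
  have hM0nonneg : 0 ≤ M0 := le_trans (by positivity) (hM0 0)
  have hmap : ∀ j : ℕ, CB ^ j = (B ^ j).map ⇑Complex.ofRealHom := by
    intro j
    induction j with
    | zero => simp [Matrix.map_one]
    | succ j ih => rw [pow_succ, pow_succ, ih, ← Matrix.map_mul]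
  have hBj : ∀ j, ‖B ^ j‖ ≤ M0 * lam ^ j := by
    intro j
    calc ‖B ^ j‖ = ‖CB ^ j‖ := by
          rw [hmap j]
          exact (Matrix.frobenius_norm_map_eq (B ^ j) _ (fun a => Complex.norm_real a)).symm
      _ ≤ M0 * lam ^ j := hCBj j
  have hApow : ∀ j : ℕ, (Matrix.fromBlocks (lam • (1 : Matrix (Fin k) (Fin k) ℝ)) 0 0 B) ^ j
      = Matrix.fromBlocks (lam ^ j • (1 : Matrix (Fin k) (Fin k) ℝ)) 0 0 (B ^ j) := by
    intro j
    rw [fromBlocks_diag_pow]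
    congr 1
    rw [smul_pow, one_pow]
  set c1 : ℝ := ‖(1 : Matrix (Fin k) (Fin k) ℝ)‖ with hc1def
  have hc1 : 0 ≤ c1 := norm_nonneg _
  have hmn : ∀ j : ℕ,
      matNorm ((Matrix.fromBlocks (lam • (1 : Matrix (Fin k) (Fin k) ℝ)) 0 0 B) ^ j)
        ≤ (c1 + M0) * lam ^ j := by
    intro j
    rw [hApow j]
    refine (matNorm_le_frobenius _).trans ?_
    refine (frobenius_fromBlocks_le _ _).trans ?_
    have h1 : ‖lam ^ j • (1 : Matrix (Fin k) (Fin k) ℝ)‖ = lam ^ j * c1 := by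
      rw [norm_smul, Real.norm_eq_abs, abs_of_pos (pow_pos hlam0 j)]
    rw [h1]
    calc lam ^ j * c1 + ‖B ^ j‖ ≤ lam ^ j * c1 + M0 * lam ^ j :=
          by linarith [hBj j]
      _ = (c1 + M0) * lam ^ j := by ring
  -- final bound
  refine ⟨1 + (c1 + M0) ^ n, fun j => ?_⟩
  have hE1 : (1 : ℝ) ≤ (lam ^ n) ^ j := one_le_pow₀ (one_le_pow₀ hlam.le)
  have hEpos : (0 : ℝ) < (lam ^ n) ^ j := by positivity
  have hrw : D ^ (-(j : ℝ) * ν) = ((lam ^ n) ^ j)⁻¹ := by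
    rw [mul_comm, Real.rpow_mul (abs_nonneg _), hkey, Real.rpow_neg (by positivity),
      Real.rpow_natCast]
  rw [hrw]
  have hmnn : matNorm ((Matrix.fromBlocks (lam • (1 : Matrix (Fin k) (Fin k) ℝ)) 0 0 B) ^ j) ^ n
      ≤ (c1 + M0) ^ n * (lam ^ n) ^ j := by
    calc matNorm _ ^ n ≤ ((c1 + M0) * lam ^ j) ^ n :=
          pow_le_pow_left₀ (matNorm_nonneg' _) (hmn j) n
      _ = (c1 + M0) ^ n * (lam ^ n) ^ j := by rw [mul_pow, ← pow_mul, ← pow_mul, mul_comm j n]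
  set E := (lam ^ n) ^ j with hEdef
  calc E⁻¹ * (1 + matNorm _ ^ n) ≤ E⁻¹ * (1 + (c1 + M0) ^ n * E) := by
        refine mul_le_mul_of_nonneg_left ?_ (inv_nonneg.mpr hEpos.le)
        linarith [hmnn]
    _ = E⁻¹ + (c1 + M0) ^ n := by field_simp
    _ ≤ 1 + (c1 + M0) ^ n := by
        have := inv_le_one_of_one_le₀ hE1
        linarith

end ANDaux
end
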